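/- Let 0 < c < π and define γ : [0, 1/cos(c/2)] → ℝ² by γ(t) = t·(cos(c/2), sin(c/2)) (the agent moves along the straight segment from the origin to the point (1, tan(c/2)) of length 1/cos(c/2)). Then for every φ ∈ [0, c] there exists t ∈ [0, 1/cos(c/2)] with γ(t) inspecting P_φ, and the average inspection time satisfies (1/c)·∫₀^{c} inspect_γ(φ) dφ = (1/c)·log((1 + sin(c/2))/(1 − sin(c/2))), where inspect_γ(φ) := inf{ t ∈ [0, 1/cos(c/2)] : γ(t) inspects P_φ }. -/

import Mathlib

open Real Set

/-- The point of the unit circle at angle `φ`. -/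
noncomputable def Ppt (φ : ℝ) : EuclideanSpace ℝ (Fin 2) := WithLp.toLp 2 ![Real.cos φ, Real.sin φ]

/-- `A` inspects the perimeter point `P_φ` if no convex combination of `A` and `P_φ`
lies in the open unit disk. -/
def Inspects (A : EuclideanSpace ℝ (Fin 2)) (φ : ℝ) : Prop :=
  ∀ s ∈ Set.Icc (0:ℝ) 1, 1 ≤ ‖(1 - s) • A + s • Ppt φ‖

/-!
For a unit vector `P` and `u = 1 - s`,
`‖(1 - s) • A + s • P‖² - 1 = 2u (⟪A, P⟫ - 1) + u² ‖A - P‖²`; for small `u` the linear term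
dominates, so `A` inspects `P` exactly when `⟪A, P⟫ ≥ 1`. On the ray towards `P_{c/2}` the point
`P_φ` is therefore first inspected at distance `1 / cos (φ - c/2)`, and the average inspection time
is the integral of the secant over `[-c/2, c/2]`, with antiderivative `log (1 + sin) - log cos`.
-/

section Segment

variable {E : Type*} [NormedAddCommGroup E] [InnerProductSpace ℝ E]

open scoped RealInnerProductSpace

lemma norm_one_sub_smul_add_smul_sq {A P : E} (hP : ‖P‖ = 1) (s : ℝ) :
    ‖(1 - s) • A + s • P‖ ^ 2 = 1 + 2 * (1 - s) * (⟪A, P⟫ - 1) + (1 - s) ^ 2 * ‖A - P‖ ^ 2 := by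
  have hsplit : (1 - s) • A + s • P = P + (1 - s) • (A - P) := by
    module
  rw [hsplit, norm_add_sq_real, norm_smul, real_inner_smul_right, inner_sub_right,
    real_inner_self_eq_norm_sq, real_inner_comm, hP, Real.norm_eq_abs, mul_pow, sq_abs]
  ring

theorem forall_one_le_norm_segment_iff {A P : E} (hP : ‖P‖ = 1) :
    (∀ s ∈ Icc (0:ℝ) 1, 1 ≤ ‖(1 - s) • A + s • P‖) ↔ 1 ≤ ⟪A, P⟫ := by
  constructor
  · intro h
    by_contra! hlt
    -- `u` is small enough that `u * D < 2 * (1 - ⟪A, P⟫)`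
    set D := ‖A - P‖ ^ 2
    set u := (1 - ⟪A, P⟫) / (D + (1 - ⟪A, P⟫))
    have hD : 0 ≤ D := sq_nonneg _
    have hu : u * (D + (1 - ⟪A, P⟫)) = 1 - ⟪A, P⟫ := div_mul_cancel₀ _ (by linarith)
    have hu0 : 0 < u := div_pos (by linarith) (by linarith)
    have hu1 : u ≤ 1 := (div_le_one (by linarith)).2 (by linarith)
    have hsq := norm_one_sub_smul_add_smul_sq (A := A) hP (1 - u)
    have hnorm := h (1 - u) ⟨by linarith, by linarith⟩
    rw [sub_sub_cancel] at hsq hnorm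
    have hsq_ge := (one_le_sq_iff₀ (norm_nonneg _)).2 hnorm
    nlinarith [mul_pos hu0 (mul_pos (sub_pos.2 hlt) (by linarith : 0 < 1 + u))]
  · intro h s hs
    have hsq := norm_one_sub_smul_add_smul_sq (A := A) hP s
    have hpos : 1 ≤ ‖(1 - s) • A + s • P‖ ^ 2 := by
      rw [hsq]
      nlinarith [hs.2, sq_nonneg (1 - s), sq_nonneg ‖A - P‖]
    exact (one_le_sq_iff₀ (norm_nonneg _)).1 hpos

end Segment

lemma norm_Ppt (φ : ℝ) : ‖Ppt φ‖ = 1 := by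
  simp [EuclideanSpace.norm_eq, Ppt, Fin.sum_univ_two, Real.cos_sq_add_sin_sq]

lemma inner_Ppt (α β : ℝ) : inner ℝ (Ppt α) (Ppt β) = cos (β - α) := by
  simp [Ppt, PiLp.inner_apply, Fin.sum_univ_two, Real.cos_sub]

theorem inspects_smul_Ppt_iff (t ψ φ : ℝ) : Inspects (t • Ppt ψ) φ ↔ 1 ≤ t * cos (φ - ψ) := by
  rw [Inspects, forall_one_le_norm_segment_iff (norm_Ppt φ), real_inner_smul_left, inner_Ppt]

lemma inspects_smul_Ppt_one_div_cos {ψ φ : ℝ} (h : 0 < cos (φ - ψ)) :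
    Inspects ((1 / cos (φ - ψ)) • Ppt ψ) φ := by
  rw [inspects_smul_Ppt_iff, one_div_mul_cancel h.ne']

theorem sInf_inspects_smul_Ppt {T ψ φ : ℝ} (h : 0 < cos (φ - ψ)) (hT : 1 / cos (φ - ψ) ≤ T) :
    sInf {t : ℝ | t ∈ Icc 0 T ∧ Inspects (t • Ppt ψ) φ} = 1 / cos (φ - ψ) := by
  have hset : {t : ℝ | t ∈ Icc 0 T ∧ Inspects (t • Ppt ψ) φ} = Icc (1 / cos (φ - ψ)) T := by
    ext t
    simp only [mem_ofPred_eq, mem_Icc, inspects_smul_Ppt_iff, div_le_iff₀ h]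
    constructor
    · rintro ⟨⟨-, htT⟩, ht⟩
      exact ⟨ht, htT⟩
    · rintro ⟨ht, htT⟩
      exact ⟨⟨nonneg_of_mul_nonneg_left (by linarith) h, htT⟩, ht⟩
  rw [hset, csInf_Icc hT]

lemma hasDerivAt_log_one_add_sin_sub_log_cos {x : ℝ} (hx : cos x ≠ 0) :
    HasDerivAt (fun θ => log (1 + sin θ) - log (cos θ)) (1 / cos x) x := by
  have hsin : 1 + sin x ≠ 0 := by
    intro h
    have hsq := sin_sq_add_cos_sq x
    rw [show sin x = -1 by linarith] at hsq
    exact hx (pow_eq_zero_iff two_ne_zero |>.1 (by linarith))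
  refine ((((hasDerivAt_sin x).const_add 1).log hsin).sub
    ((hasDerivAt_cos x).log hx)).congr_deriv ?_
  field_simp
  linear_combination sin_sq_add_cos_sq x

theorem integral_one_div_cos {a b : ℝ} (h : ∀ x ∈ uIcc a b, cos x ≠ 0) :
    ∫ x in a..b, 1 / cos x
      = (log (1 + sin b) - log (cos b)) - (log (1 + sin a) - log (cos a)) :=
  intervalIntegral.integral_eq_sub_of_hasDerivAt
    (fun x hx => hasDerivAt_log_one_add_sin_sub_log_cos (h x hx))
    (continuousOn_const.div continuous_cos.continuousOn h).intervalIntegrable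

theorem integral_one_div_cos_symm {a : ℝ} (ha : |a| < π / 2) :
    ∫ x in -a..a, 1 / cos x = log ((1 + sin a) / (1 - sin a)) := by
  obtain ⟨ha₁, ha₂⟩ := abs_lt.1 ha
  have hcos : ∀ x ∈ uIcc (-a) a, 0 < cos x := by
    intro x hx
    apply cos_pos_of_mem_Ioo
    rcases mem_uIcc.1 hx with h | h <;> constructor <;> linarith [h.1, h.2]
  have hcos_a := hcos a right_mem_uIcc
  have h₁ : 0 < 1 + sin a := by nlinarith [sin_sq_add_cos_sq a, neg_one_le_sin a]
  have h₂ : 0 < 1 - sin a := by nlinarith [sin_sq_add_cos_sq a, sin_le_one a]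
  rw [integral_one_div_cos fun x hx => (hcos x hx).ne', sin_neg, cos_neg, log_div h₁.ne' h₂.ne',
    ← sub_eq_add_neg]
  ring

theorem single_segment_average_partial (c : ℝ) (hc : c ∈ Set.Ioo 0 π) :
    (∀ φ ∈ Set.Icc 0 c, ∃ t ∈ Set.Icc 0 (1 / Real.cos (c/2)),
        Inspects (t • Ppt (c/2)) φ) ∧
    (1/c) * (∫ φ in (0:ℝ)..c,
        sInf {t : ℝ | t ∈ Set.Icc 0 (1 / Real.cos (c/2)) ∧ Inspects (t • Ppt (c/2)) φ})
      = (1/c) * Real.log ((1 + Real.sin (c/2)) / (1 - Real.sin (c/2))) := by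
  obtain ⟨hc₀, hcπ⟩ := hc
  have hcos_pos : 0 < cos (c / 2) := cos_pos_of_mem_Ioo ⟨by linarith, by linarith⟩
  have hcos_le : ∀ φ ∈ Icc 0 c, cos (c / 2) ≤ cos (φ - c / 2) := fun φ hφ => by
    rw [← cos_abs (φ - c / 2)]
    exact cos_le_cos_of_nonneg_of_le_pi (abs_nonneg _) (by linarith)
      (abs_le.2 ⟨by linarith [hφ.1], by linarith [hφ.2]⟩)
  have hpos : ∀ φ ∈ Icc 0 c, 0 < cos (φ - c / 2) := fun φ hφ => hcos_pos.trans_le (hcos_le φ hφ)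
  have hT : ∀ φ ∈ Icc 0 c, 1 / cos (φ - c / 2) ≤ 1 / cos (c / 2) := fun φ hφ =>
    one_div_le_one_div_of_le hcos_pos (hcos_le φ hφ)
  refine ⟨fun φ hφ => ⟨_, ⟨(one_div_pos.2 (hpos φ hφ)).le, hT φ hφ⟩,
    inspects_smul_Ppt_one_div_cos (hpos φ hφ)⟩, ?_⟩
  have hsInf : ∀ φ ∈ uIcc 0 c,
      sInf {t : ℝ | t ∈ Icc 0 (1 / cos (c / 2)) ∧ Inspects (t • Ppt (c / 2)) φ}
        = 1 / cos (φ - c / 2) := fun φ hφ => by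
    rw [uIcc_of_le hc₀.le] at hφ
    exact sInf_inspects_smul_Ppt (hpos φ hφ) (hT φ hφ)
  rw [intervalIntegral.integral_congr hsInf,
    intervalIntegral.integral_comp_sub_right (fun x => 1 / cos x), zero_sub, sub_half,
    integral_one_div_cos_symm (by rw [abs_of_pos (half_pos hc₀)]; linarith)]
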